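/- arXiv:1711.06052 — 5 statements merged into one kernel-verified Lean document; each statement's English description precedes it below -/
import Mathlib

section
/- Let k ≥ 2, n = k(k+1)+2, and 0 ≤ m ≤ n/2. Then the graph G_k(m) (obtained from G_k(0) by adding an m-edge matching inside Y) has density ρ(G_k(m)) = k - 1/2 + (k+2+2m)/(2(k²+2k+2)); consequently ρ(G_k(m+1)) - ρ(G_k(m)) = 1/(k²+2k+2) for 0 ≤ m < n/2, and ρ(G_k(n/2 - 1)) = k. -/
/-- with `k ≥ 2`, `n = k(k+1)+2` and `d m = (C(k,2) + nk + m)/(n+k)` the density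
of `G_k(m)`: for `0 ≤ m ≤ n/2`, `d m = k - 1/2 + (k+2+2m)/(2(k²+2k+2))`; consecutive
densities differ by `1/(k²+2k+2)` for `m < n/2`; and `d (n/2 - 1) = k`. -/
theorem stmt6 (k n : ℕ) (hk : 2 ≤ k) (hn : n = k * (k + 1) + 2)
    (d : ℝ → ℝ)
    (hd : ∀ x : ℝ, d x = ((k : ℝ) * ((k : ℝ) - 1) / 2 + (n : ℝ) * k + x) / ((n : ℝ) + k)) :
    (∀ m : ℕ, 2 * m ≤ n →
        d m = (k : ℝ) - 1 / 2 + ((k : ℝ) + 2 + 2 * m) / (2 * ((k : ℝ) ^ 2 + 2 * k + 2))) ∧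
    (∀ m : ℕ, 2 * (m + 1) ≤ n →
        d (m + 1) - d m = 1 / ((k : ℝ) ^ 2 + 2 * k + 2)) ∧
    d ((n : ℝ) / 2 - 1) = (k : ℝ) := by
  have hnr : (n : ℝ) = (k : ℝ) * ((k : ℝ) + 1) + 2 := by
    rw [hn]; push_cast; ring
  have hk0 : (0 : ℝ) ≤ (k : ℝ) := Nat.cast_nonneg k
  have hden : (k : ℝ) ^ 2 + 2 * k + 2 ≠ 0 := by positivity
  have hnk : (n : ℝ) + k ≠ 0 := by rw [hnr]; positivity
  refine ⟨fun m _ => ?_, fun m _ => ?_, ?_⟩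
  · rw [hd, hnr]; field_simp; ring
  · rw [hd, hd, hnr]; field_simp; ring
  · rw [hd, hnr]; field_simp; ring
end

section
/- Let m ≥ 0, k ≥ 2, 0 ≤ t ≤ k-1, and n = mk + 1 + t. Let G be a connected graph on n vertices in which every edge is contained in a (k+1)-vertex 2⁼-plant or in some 2⁺-plant. Then e(G) ≥ 2n - 2 - m = (2 - 1/k)n + (t+1)/k - 2. -/
/-- A 2-plant: a graph on an ordered vertex set `v₀ < v₁ < ⋯` (here `Fin m`) such that
`v₀v₁` is an edge and every later vertex has at least 2 earlier neighbours. -/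
def IsTwoPlant {m : ℕ} (P : SimpleGraph (Fin m)) : Prop :=
  ∃ h : 2 ≤ m, P.Adj ⟨0, by omega⟩ ⟨1, by omega⟩ ∧
    ∀ i : Fin m, 2 ≤ (i : ℕ) → 2 ≤ {j : Fin m | j < i ∧ P.Adj j i}.ncard

/-- A 2⁼-plant: every later vertex has exactly 2 earlier neighbours. -/
def IsTwoEqPlant {m : ℕ} (P : SimpleGraph (Fin m)) : Prop :=
  ∃ h : 2 ≤ m, P.Adj ⟨0, by omega⟩ ⟨1, by omega⟩ ∧
    ∀ i : Fin m, 2 ≤ (i : ℕ) → {j : Fin m | j < i ∧ P.Adj j i}.ncard = 2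

/-- A 2⁺-plant: a 2-plant where some later vertex has at least 3 earlier neighbours. -/
def IsTwoPlusPlant {m : ℕ} (P : SimpleGraph (Fin m)) : Prop :=
  IsTwoPlant P ∧ ∃ i : Fin m, 2 ≤ (i : ℕ) ∧ 3 ≤ {j : Fin m | j < i ∧ P.Adj j i}.ncard

/-- The edge `e` of `G` lies in an `m`-vertex 2⁼-plant subgraph of `G`. -/
def EdgeInTwoEqPlant {V : Type*} (G : SimpleGraph V) (m : ℕ) (e : Sym2 V) : Prop :=
  ∃ (P : SimpleGraph (Fin m)) (f : Fin m ↪ V),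
    IsTwoEqPlant P ∧ (∀ i j, P.Adj i j → G.Adj (f i) (f j)) ∧
    ∃ i j, P.Adj i j ∧ e = s(f i, f j)

/-- The edge `e` of `G` lies in some 2⁺-plant subgraph of `G`. -/
def EdgeInTwoPlusPlant {V : Type*} (G : SimpleGraph V) (e : Sym2 V) : Prop :=
  ∃ (m : ℕ) (P : SimpleGraph (Fin m)) (f : Fin m ↪ V),
    IsTwoPlusPlant P ∧ (∀ i j, P.Adj i j → G.Adj (f i) (f j)) ∧
    ∃ i j, P.Adj i j ∧ e = s(f i, f j)

/-!
Grow a vertex set `U` of `G` from a single vertex. While `U ≠ V`, connectivity gives an edge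
leaving `U`; it lies in a plant, and we add the whole plant to `U`. Counting each plant edge at
its later endpoint, a 2-plant on `s` vertices has at least `2s - 3` edges, and if it already
shares at least two vertices with `U` it brings at least two new edges per new vertex. If it
shares only one vertex, it brings all its edges: at least `2(s - 1)` for a 2⁺-plant, but only
`2k - 1` for the `k` new vertices of a `(k + 1)`-vertex 2⁼-plant. Every lost edge thus comes
with `k` new vertices, so at most `⌊(n - 1) / k⌋ = m` edges are lost and `e(G) ≥ 2(n - 1) - m`.
-/

open Finset

open scoped Classical

namespace SimpleGraph

variable {V : Type*} (G : SimpleGraph V)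

noncomputable def edgesWithin (U : Finset V) : Finset (Sym2 V) := U.sym2.filter (· ∈ G.edgeSet)

variable {G} in
lemma mem_edgesWithin {U : Finset V} {e : Sym2 V} :
    e ∈ G.edgesWithin U ↔ e ∈ G.edgeSet ∧ ∀ v ∈ e, v ∈ U := by
  simp [edgesWithin, Finset.mem_sym2_iff, and_comm]

lemma edgesWithin_eq_empty_of_card_le_one {U : Finset V} (hU : #U ≤ 1) :
    G.edgesWithin U = ∅ := by
  refine eq_empty_of_forall_notMem fun e he => ?_
  induction e using Sym2.ind with | _ a b
  simp only [mem_edgesWithin, mem_edgeSet, Sym2.mem_iff, forall_eq_or_imp, forall_eq] at he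
  exact he.1.ne (card_le_one.1 hU a he.2.1 b he.2.2)

lemma card_edgesWithin_univ [Fintype V] : #(G.edgesWithin univ) = Nat.card G.edgeSet := by
  rw [Nat.card_coe_set_eq, Set.ncard_eq_toFinset_card']
  congr 1
  ext e
  simp [mem_edgesWithin]

section LinearOrder

variable {α : Type*} [LinearOrder α] (P : SimpleGraph α)

noncomputable def lowerNeighbors (T : Finset α) (i : α) : Finset α :=
  T.filter (fun j => j < i ∧ P.Adj j i)

lemma card_edgesWithin_eq_sum_card_lowerNeighbors (T : Finset α) :
    #(P.edgesWithin T) = ∑ i ∈ T, #(P.lowerNeighbors T i) := by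
  rw [card_eq_sum_card_fiberwise (f := Sym2.sup) (t := T)]
  · refine sum_congr rfl fun i hi => (card_nbij (fun j => s(j, i)) ?_ ?_ ?_).symm
    · intro j hj
      simp only [lowerNeighbors, coe_filter, Set.mem_ofPred_eq] at hj
      simp [mem_edgesWithin, hj.2.2, hj.1, hi, hj.2.1.le]
    · intro j _ j' _ h
      exact Sym2.congr_left.1 h
    · intro e he
      induction e using Sym2.ind with | _ a b
      simp only [coe_filter, Set.mem_ofPred_eq, mem_edgesWithin, mem_edgeSet, Sym2.mem_iff,
        forall_eq_or_imp, forall_eq, Sym2.sup_mk] at he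
      obtain ⟨⟨hab, ha, hb⟩, rfl⟩ := he
      rcases hab.ne.lt_or_gt with h | h
      · exact ⟨a, by simp [lowerNeighbors, ha, h, hab, h.le]⟩
      · exact ⟨b, by simp [lowerNeighbors, hb, h, hab.symm, h.le, Sym2.eq_swap]⟩
  · intro e he
    induction e using Sym2.ind with | _ a b
    simp only [mem_coe, mem_edgesWithin, Sym2.mem_iff, forall_eq_or_imp,
      forall_eq] at he ⊢
    rcases le_total a b with h | h <;> simp [h, he.2.1, he.2.2]

/-- `T₂` is `T` without its two lowest vertices, which span at most one edge. -/
lemma exists_card_edgesWithin_le_sum_add_one (T : Finset α) (hT : 2 ≤ #T) :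
    ∃ T₂ ⊆ T, #T₂ + 2 = #T ∧
      #(P.edgesWithin T) ≤ ∑ i ∈ T₂, #(P.lowerNeighbors T i) + 1 := by
  have hT₀ : T.Nonempty := card_pos.1 (by omega)
  set t₀ := T.min' hT₀
  have ht₀ : t₀ ∈ T := T.min'_mem hT₀
  have hT₁ : (T.erase t₀).Nonempty := card_pos.1 (by rw [card_erase_of_mem ht₀]; omega)
  set t₁ := (T.erase t₀).min' hT₁
  have ht₁ : t₁ ∈ T.erase t₀ := min'_mem _ hT₁
  have hlow₀ : P.lowerNeighbors T t₀ = ∅ :=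
    filter_eq_empty_iff.2 fun j hj h => (T.min'_le j hj).not_gt h.1
  have hlow₁ : P.lowerNeighbors T t₁ ⊆ {t₀} := fun j hj => by
    simp only [lowerNeighbors, mem_filter] at hj
    by_contra hne
    exact ((T.erase t₀).min'_le j (mem_erase.2 ⟨by simpa using hne, hj.1⟩)).not_gt hj.2.1
  refine ⟨(T.erase t₀).erase t₁, (erase_subset _ _).trans (erase_subset _ _), ?_, ?_⟩
  · rw [card_erase_of_mem ht₁, card_erase_of_mem ht₀]
    omega
  · rw [card_edgesWithin_eq_sum_card_lowerNeighbors, ← add_sum_erase _ _ ht₀,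
      ← add_sum_erase _ _ ht₁, hlow₀, card_empty]
    have := (card_le_card hlow₁).trans_eq (card_singleton t₀)
    omega

lemma ncard_setOf_lt_adj [Fintype α] (i : α) :
    {j | j < i ∧ P.Adj j i}.ncard = #(P.lowerNeighbors univ i) := by
  rw [Set.ncard_eq_toFinset_card']
  simp [lowerNeighbors]

end LinearOrder

variable {W : Type*} [Fintype W] {P : SimpleGraph W}

lemma card_edgesWithin_add_card_edgesWithin_le (f : W ↪ V)
    (hf : ∀ i j, P.Adj i j → G.Adj (f i) (f j)) (U : Finset V) :
    #(G.edgesWithin U) + #(P.edgesWithin univ)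
      ≤ #(G.edgesWithin (U ∪ univ.map f)) + #(P.edgesWithin (univ.filter (f · ∈ U))) := by
  set A := G.edgesWithin U
  set N := (P.edgesWithin univ).image (Sym2.map f)
  have hA : A ⊆ G.edgesWithin (U ∪ univ.map f) := fun e he => by
    rw [mem_edgesWithin] at he ⊢
    exact ⟨he.1, fun v hv => mem_union_left _ (he.2 v hv)⟩
  have hN : N ⊆ G.edgesWithin (U ∪ univ.map f) := by
    intro _ hN
    obtain ⟨e, he, rfl⟩ := mem_image.1 hN
    induction e using Sym2.ind with | _ a b
    simp only [mem_edgesWithin, mem_edgeSet, Sym2.mem_iff, forall_eq_or_imp, forall_eq,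
      Sym2.map_mk] at he ⊢
    exact ⟨hf a b he.1, by simp, by simp⟩
  have hAN : A ∩ N ⊆ (P.edgesWithin (univ.filter (f · ∈ U))).image (Sym2.map f) := by
    intro _ hAN
    obtain ⟨heA, heN⟩ := mem_inter.1 hAN
    obtain ⟨e, he, rfl⟩ := mem_image.1 heN
    induction e using Sym2.ind with | _ a b
    simp only [A, mem_edgesWithin, mem_edgeSet, Sym2.mem_iff, forall_eq_or_imp, forall_eq,
      Sym2.map_mk] at he heA
    exact mem_image_of_mem _ (by simp [mem_edgesWithin, he.1, heA.2])
  calc #A + #(P.edgesWithin univ) = #A + #N := by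
        rw [card_image_of_injective _ (Sym2.map.injective f.injective)]
    _ = #(A ∪ N) + #(A ∩ N) := (card_union_add_card_inter A N).symm
    _ ≤ _ :=
      add_le_add (card_le_card (union_subset hA hN)) ((card_le_card hAN).trans card_image_le)

end SimpleGraph

open SimpleGraph

lemma Finset.card_compl_union_map_add_card_compl_filter {V W : Type*} [Fintype V] [Fintype W]
    [DecidableEq W] (U : Finset V) (f : W ↪ V) :
    #(U ∪ univ.map f)ᶜ + #(univ.filter (f · ∈ U))ᶜ = #Uᶜ := by
  have : (univ.filter (f · ∈ U))ᶜ.map f = Uᶜ ∩ univ.map f := by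
    ext v
    simp only [mem_map, compl_filter, mem_filter, mem_univ, true_and, mem_inter, mem_compl]
    constructor
    · rintro ⟨w, hw, rfl⟩
      exact ⟨hw, w, rfl⟩
    · rintro ⟨hv, w, rfl⟩
      exact ⟨w, hv, rfl⟩
  rw [← card_map f, this, compl_union, ← sdiff_eq_inter_compl, card_sdiff_add_card_inter]

lemma Nat.two_mul_card_le_sum_min_two_add_three (S : Finset ℕ) :
    2 * #S ≤ ∑ n ∈ S, min n 2 + 3 := by
  have hdeficit : ∑ n ∈ S, (2 - n) ≤ ∑ n ∈ range 2, (2 - n) :=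
    sum_le_sum_of_ne_zero fun n _ hn => mem_range.2 (by omega)
  calc 2 * #S = ∑ n ∈ S, (min n 2 + (2 - n)) := by
        rw [sum_congr rfl fun n _ => show min n 2 + (2 - n) = 2 by omega, sum_const, smul_eq_mul,
          mul_comm]
    _ ≤ ∑ n ∈ S, min n 2 + 3 := by
        rw [sum_add_distrib]
        simpa [sum_range_succ] using hdeficit

lemma IsTwoEqPlant.isTwoPlant {n : ℕ} {P : SimpleGraph (Fin n)} (hP : IsTwoEqPlant P) :
    IsTwoPlant P :=
  let ⟨hn, h01, hdeg⟩ := hP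
  ⟨hn, h01, fun i hi => (hdeg i hi).ge⟩

namespace IsTwoPlant

variable {n : ℕ} {P : SimpleGraph (Fin n)}

lemma min_two_le_card_lowerNeighbors (hP : IsTwoPlant P) (i : Fin n) :
    min (i : ℕ) 2 ≤ #(P.lowerNeighbors univ i) := by
  obtain ⟨hn, h01, hdeg⟩ := hP
  obtain hi | hi | hi : (i : ℕ) = 0 ∨ (i : ℕ) = 1 ∨ 2 ≤ (i : ℕ) := by omega
  · simp [hi]
  · have h0 : (⟨0, by omega⟩ : Fin n) ∈ P.lowerNeighbors univ i := by
      simp only [lowerNeighbors, mem_filter, mem_univ, true_and, Fin.lt_def]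
      exact ⟨by omega, by convert h01⟩
    simpa [hi] using card_pos.2 ⟨_, h0⟩
  · simpa [hi, P.ncard_setOf_lt_adj] using hdeg i hi

lemma two_mul_card_le_sum_add_three (hP : IsTwoPlant P) (S : Finset (Fin n)) :
    2 * #S ≤ ∑ i ∈ S, #(P.lowerNeighbors univ i) + 3 :=
  calc 2 * #S = 2 * #(S.map Fin.valEmbedding) := by rw [card_map]
    _ ≤ ∑ i ∈ S, min (i : ℕ) 2 + 3 := by
        simpa using Nat.two_mul_card_le_sum_min_two_add_three (S.map Fin.valEmbedding)
    _ ≤ ∑ i ∈ S, #(P.lowerNeighbors univ i) + 3 := by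
        gcongr with i
        exact hP.min_two_le_card_lowerNeighbors i

lemma two_mul_le_card_edgesWithin_add_three (hP : IsTwoPlant P) :
    2 * n ≤ #(P.edgesWithin univ) + 3 := by
  simpa [card_edgesWithin_eq_sum_card_lowerNeighbors] using hP.two_mul_card_le_sum_add_three univ

lemma card_edgesWithin_add_two_mul_card_compl_le (hP : IsTwoPlant P) {T : Finset (Fin n)}
    (hT : 2 ≤ #T) : #(P.edgesWithin T) + 2 * #Tᶜ ≤ #(P.edgesWithin univ) := by
  obtain ⟨T₂, hT₂T, hcard, hle⟩ := P.exists_card_edgesWithin_le_sum_add_one T hT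
  have hmono : ∑ i ∈ T₂, #(P.lowerNeighbors T i) ≤ ∑ i ∈ T₂, #(P.lowerNeighbors univ i) :=
    sum_le_sum fun i _ => card_le_card (filter_subset_filter _ (subset_univ T))
  have hsplit : #(P.edgesWithin univ)
      = ∑ i ∈ T₂, #(P.lowerNeighbors univ i) + ∑ i ∈ T₂ᶜ, #(P.lowerNeighbors univ i) := by
    rw [card_edgesWithin_eq_sum_card_lowerNeighbors, sum_add_sum_compl]
  have hcompl : #T₂ᶜ = #Tᶜ + 2 := by
    rw [card_compl, card_compl]
    have := card_le_univ T
    omega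
  have := hP.two_mul_card_le_sum_add_three T₂ᶜ
  omega

end IsTwoPlant

lemma IsTwoPlusPlant.two_mul_le_card_edgesWithin_add_two {n : ℕ} {P : SimpleGraph (Fin n)}
    (hP : IsTwoPlusPlant P) : 2 * n ≤ #(P.edgesWithin univ) + 2 := by
  obtain ⟨hP, i, -, hi⟩ := hP
  rw [P.ncard_setOf_lt_adj] at hi
  have hsplit : #(P.edgesWithin univ)
      = #(P.lowerNeighbors univ i) + ∑ j ∈ univ.erase i, #(P.lowerNeighbors univ j) := by
    rw [card_edgesWithin_eq_sum_card_lowerNeighbors, ← add_sum_erase _ _ (mem_univ i)]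
  have hcard : #(univ.erase i) + 1 = n := by
    rw [card_erase_of_mem (mem_univ i), card_univ, Fintype.card_fin]
    have := i.pos
    omega
  have := hP.two_mul_card_le_sum_add_three (univ.erase i)
  omega

section Growth

variable {V : Type*} [Fintype V] {G : SimpleGraph V}

/-- `U'` is `U` together with the image of the plant; the second alternative is the case where
the plant meets `U` in a single vertex. -/
lemma IsTwoPlant.exists_superset_edge_gain {n : ℕ} {P : SimpleGraph (Fin n)} (hP : IsTwoPlant P)
    (f : Fin n ↪ V) (hf : ∀ i j, P.Adj i j → G.Adj (f i) (f j)) {U : Finset V} {x y : V}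
    (hx : x ∈ U) (hy : y ∉ U) {i j : Fin n} (hxy : s(x, y) = s(f i, f j)) :
    ∃ U', U ⊆ U' ∧ #U'ᶜ < #Uᶜ ∧
      (#(G.edgesWithin U) + 2 * #Uᶜ ≤ #(G.edgesWithin U') + 2 * #U'ᶜ ∨
        #Uᶜ = #U'ᶜ + (n - 1) ∧
          #(G.edgesWithin U) + #(P.edgesWithin univ) ≤ #(G.edgesWithin U')) := by
  have hcount := card_compl_union_map_add_card_compl_filter U f
  have hgain := G.card_edgesWithin_add_card_edgesWithin_le f hf U
  set T := univ.filter (f · ∈ U)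
  obtain ⟨⟨a, ha⟩, ⟨b, hb⟩⟩ : (∃ a, f a ∈ U) ∧ ∃ b, f b ∉ U := by
    rcases Sym2.eq_iff.1 hxy with ⟨rfl, rfl⟩ | ⟨rfl, rfl⟩
    exacts [⟨⟨i, hx⟩, j, hy⟩, ⟨⟨j, hx⟩, i, hy⟩]
  have hT : 0 < #T := card_pos.2 ⟨a, by simp [T, ha]⟩
  have hTc : 0 < #Tᶜ := card_pos.2 ⟨b, by simp [T, hb]⟩
  refine ⟨U ∪ univ.map f, subset_union_left, by omega, ?_⟩
  rcases le_or_gt 2 #T with hT₂ | hT₁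
  · have := hP.card_edgesWithin_add_two_mul_card_compl_le hT₂
    omega
  · rw [P.edgesWithin_eq_empty_of_card_le_one (U := T) (by omega), card_empty] at hgain
    have : #Tᶜ = n - 1 := by
      rw [card_compl, Fintype.card_fin]
      omega
    omega

theorem SimpleGraph.Connected.exists_superset_edge_gain (hconn : G.Connected) {k : ℕ}
    (hedges : ∀ e ∈ G.edgeSet, EdgeInTwoEqPlant G (k + 1) e ∨ EdgeInTwoPlusPlant G e)
    {U : Finset V} (hU : U.Nonempty) (hUc : Uᶜ.Nonempty) :
    ∃ U', U ⊆ U' ∧ #U'ᶜ < #Uᶜ ∧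
      #(G.edgesWithin U) + 2 * #Uᶜ + #U'ᶜ / k ≤ #(G.edgesWithin U') + 2 * #U'ᶜ + #Uᶜ / k := by
  obtain ⟨u, hu⟩ := hU
  obtain ⟨w, hw⟩ := hUc
  obtain ⟨d, -, hx, hy⟩ :=
    (hconn.preconnected u w).some.exists_boundary_dart (U : Set V) hu (by simpa using hw)
  rcases hedges _ d.edge_mem with ⟨P, f, hP, hf, i, j, -, hxy⟩ | ⟨n, P, f, hP, hf, i, j, -, hxy⟩
  · obtain ⟨U', hUU', hlt, hgain | ⟨hcard, hgain⟩⟩ :=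
      hP.isTwoPlant.exists_superset_edge_gain f hf hx hy hxy
    · exact ⟨U', hUU', hlt, by have := Nat.div_le_div_right (c := k) hlt.le; omega⟩
    · refine ⟨U', hUU', hlt, ?_⟩
      have hk : 0 < k := by have := hP.1; omega
      have hdiv : #Uᶜ / k = #U'ᶜ / k + 1 := by
        rw [hcard, Nat.add_sub_cancel, Nat.add_div_right _ hk]
      have := hP.isTwoPlant.two_mul_le_card_edgesWithin_add_three
      omega
  · obtain ⟨U', hUU', hlt, hgain | ⟨hcard, hgain⟩⟩ :=
      hP.1.exists_superset_edge_gain f hf hx hy hxy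
    · exact ⟨U', hUU', hlt, by have := Nat.div_le_div_right (c := k) hlt.le; omega⟩
    · refine ⟨U', hUU', hlt, ?_⟩
      have := hP.two_mul_le_card_edgesWithin_add_two
      have := hP.1.1
      have := Nat.div_le_div_right (c := k) hlt.le
      omega

theorem SimpleGraph.Connected.card_edgesWithin_add_two_mul_card_compl_le (hconn : G.Connected)
    {k : ℕ} (hedges : ∀ e ∈ G.edgeSet, EdgeInTwoEqPlant G (k + 1) e ∨ EdgeInTwoPlusPlant G e)
    {U : Finset V} (hU : U.Nonempty) :
    #(G.edgesWithin U) + 2 * #Uᶜ ≤ Nat.card G.edgeSet + #Uᶜ / k := by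
  induction hr : #Uᶜ using Nat.strong_induction_on generalizing U with
  | _ r ih =>
    subst hr
    rcases Uᶜ.eq_empty_or_nonempty with hUc | hUc
    · rw [compl_eq_empty_iff] at hUc
      simp [hUc, card_edgesWithin_univ]
    · obtain ⟨U', hUU', hlt, hgain⟩ := hconn.exists_superset_edge_gain hedges hU hUc
      have := ih _ hlt (hU.mono hUU') rfl
      omega

end Growth

/-- let `m ≥ 0`, `k ≥ 2`, `0 ≤ t ≤ k-1`, and let `G` be a connected graph on
`n = mk+1+t` vertices in which every edge lies in a `(k+1)`-vertex 2⁼-plant or in some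
2⁺-plant. Then `e(G) ≥ 2n - 2 - m = (2 - 1/k)n + (t+1)/k - 2`. -/
theorem stmt8 {V : Type*} [Fintype V] (G : SimpleGraph V)
    (m k t : ℕ) (hk : 2 ≤ k) (ht : t ≤ k - 1)
    (hn : Fintype.card V = m * k + 1 + t)
    (hconn : G.Connected)
    (hedges : ∀ e ∈ G.edgeSet, EdgeInTwoEqPlant G (k + 1) e ∨ EdgeInTwoPlusPlant G e) :
    (Nat.card G.edgeSet : ℤ) ≥ 2 * (m * k + 1 + t : ℤ) - 2 - m ∧
    (2 * ((m * k + 1 + t : ℕ) : ℝ) - 2 - m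
      = (2 - 1 / (k : ℝ)) * ((m * k + 1 + t : ℕ) : ℝ) + ((t : ℝ) + 1) / k - 2) := by
  refine ⟨?_, by field_simp; push_cast; ring⟩
  obtain ⟨v⟩ : Nonempty V := Fintype.card_pos_iff.1 (by omega)
  have hbound := hconn.card_edgesWithin_add_two_mul_card_compl_le hedges (singleton_nonempty v)
  have hcompl : #({v}ᶜ : Finset V) = m * k + t := by
    rw [card_compl, hn, card_singleton]
    omega
  have hdiv : (m * k + t) / k = m := by
    rw [add_comm, Nat.add_mul_div_right _ _ (by omega), Nat.div_eq_of_lt (by omega), zero_add]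
  rw [hcompl, hdiv] at hbound
  omega
end

section
/- Suppose real numbers e, v, an integer k ≥ 2 satisfy 2 - 1/(k-1) < e/v < 2 - 1/k with v > 0. Then v ≥ k, e - 2v + 1 < 0, and (e - (2j-3))/(v - (j-1)) ≥ (e - (2k-3))/(v - (k-1)) > e/v for every integer j with 2 ≤ j ≤ k. -/
/-- if `e`, `v` are the edge and vertex counts of a graph with
`2 - 1/(k-1) < e/v < 2 - 1/k` for some integer `k ≥ 2`, then `v ≥ k`, `e - 2v + 1 < 0`, and
for every integer `2 ≤ j ≤ k`,
`(e - (2j-3))/(v - (j-1)) ≥ (e - (2k-3))/(v - (k-1)) > e/v`. -/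
theorem stmt10 (k : ℕ) (hk : 2 ≤ k) (e v : ℕ) (hv : 0 < v)
    (h1 : 2 - 1 / ((k : ℝ) - 1) < (e : ℝ) / v)
    (h2 : (e : ℝ) / v < 2 - 1 / (k : ℝ)) :
    k ≤ v ∧ (e : ℝ) - 2 * v + 1 < 0 ∧
    ∀ j : ℕ, 2 ≤ j → j ≤ k →
      (((e : ℝ) - (2 * (j : ℝ) - 3)) / ((v : ℝ) - ((j : ℝ) - 1))
          ≥ ((e : ℝ) - (2 * (k : ℝ) - 3)) / ((v : ℝ) - ((k : ℝ) - 1)) ∧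
        ((e : ℝ) - (2 * (k : ℝ) - 3)) / ((v : ℝ) - ((k : ℝ) - 1)) > (e : ℝ) / v) := by
  have hK : (2 : ℝ) ≤ (k : ℝ) := by exact_mod_cast hk
  have hv' : (0 : ℝ) < (v : ℝ) := by exact_mod_cast hv
  have hK1 : (0 : ℝ) < (k : ℝ) - 1 := by linarith
  have hK0 : (0 : ℝ) < (k : ℝ) := by linarith
  have hinv1 : ((k : ℝ) - 1) * (1 / ((k : ℝ) - 1)) = 1 := by field_simp
  have hinv2 : (k : ℝ) * (1 / (k : ℝ)) = 1 := by field_simp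
  have hA' : (2 - 1 / ((k : ℝ) - 1)) * v < e := (lt_div_iff₀ hv').mp h1
  have hB' : (e : ℝ) < (2 - 1 / (k : ℝ)) * v := (div_lt_iff₀ hv').mp h2
  -- A : (2k-3) v < e (k-1);  B : e k < (2k-1) v
  have hA : (2 * (k : ℝ) - 3) * v < (e : ℝ) * ((k : ℝ) - 1) := by
    nlinarith [mul_lt_mul_of_pos_right hA' hK1, hinv1]
  have hB : (e : ℝ) * k < (2 * (k : ℝ) - 1) * v := by
    nlinarith [mul_lt_mul_of_pos_right hB' hK0, hinv2]
  -- e ≤ 2v - 1 in ℕ-land: first e < 2v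
  have he2v : e < 2 * v := by
    have : (e : ℝ) < 2 * v := by nlinarith
    exact_mod_cast this
  have he1 : (e : ℝ) ≤ 2 * v - 1 := by
    have : e + 1 ≤ 2 * v := he2v
    have : (e : ℝ) + 1 ≤ 2 * v := by exact_mod_cast this
    linarith
  have hkv : k ≤ v := by
    have : (k : ℝ) < (v : ℝ) + 1 := by nlinarith
    have : (k : ℝ) ≤ (v : ℝ) := by
      have h' : k < v + 1 := by exact_mod_cast this
      exact_mod_cast Nat.lt_succ_iff.mp h'
    exact_mod_cast this
  have hkvR : (k : ℝ) ≤ (v : ℝ) := by exact_mod_cast hkv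
  have hden : (e : ℝ) - 2 * v + 1 < 0 := by nlinarith
  refine ⟨hkv, hden, ?_⟩
  intro j hj2 hjk
  have hJ : (2 : ℝ) ≤ (j : ℝ) := by exact_mod_cast hj2
  have hJK : (j : ℝ) ≤ (k : ℝ) := by exact_mod_cast hjk
  have hdk : (0 : ℝ) < (v : ℝ) - ((k : ℝ) - 1) := by linarith
  have hdj : (0 : ℝ) < (v : ℝ) - ((j : ℝ) - 1) := by linarith
  constructor
  · rw [ge_iff_le, div_le_div_iff₀ hdk hdj]
    nlinarith [mul_nonneg (sub_nonneg.mpr hJK) (by linarith : (0:ℝ) ≤ 2 * v - e - 1)]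
  · rw [gt_iff_lt, div_lt_div_iff₀ hv' hdk]
    nlinarith
end

section
/- Let v ≥ 5 and let G be a strictly 2-minor-balanced graph on v vertices (meaning ρ_2(G) > 0 and ρ_2(G) > ρ_2(H) for every proper minor H of G, where ρ_2(K) = (e(K)-1)/(v(K)-2) when e(K) ≥ 2). Then G is 3-connected. -/
/-- `H` is a minor of `G` (branch set definition). -/
def SimpleGraph.IsMinor {W V : Type*} (H : SimpleGraph W) (G : SimpleGraph V) : Prop :=
  ∃ f : W → Set V,
    (∀ w, (G.induce (f w)).Connected) ∧
    (Pairwise fun w₁ w₂ => Disjoint (f w₁) (f w₂)) ∧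
    (∀ ⦃w₁ w₂⦄, H.Adj w₁ w₂ → ∃ a ∈ f w₁, ∃ b ∈ f w₂, G.Adj a b)

def SimpleGraph.IsProperMinor {W V : Type*} (H : SimpleGraph W) (G : SimpleGraph V) : Prop :=
  H.IsMinor G ∧ IsEmpty (H ≃g G)

/-- `ρ₂(G) = (e-1)/(v-2)` when `e ≥ 2`, and `0` otherwise. -/
noncomputable def SimpleGraph.rho2 {V : Type*} (G : SimpleGraph V) : ℝ :=
  if 2 ≤ Nat.card G.edgeSet then
    ((Nat.card G.edgeSet : ℝ) - 1) / ((Nat.card V : ℝ) - 2)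
  else 0

/-!
Suppose `S`, with `|S| ≤ 2`, separates `G` into sides `X ⊇ S` and `Y ⊇ S` with no edges
between `X \ Y` and `Y \ X`. Strict balance bounds `e(P) - 1` by `ρ₂(G) (|X| - 2)` for any
minor `P` on `X`, similarly for `Y`, strictly on a side with at least three vertices. Adding the
bounds and using `e(G[X]) + e(G[Y]) = e(G) + e(G[S])`, `|X| + |Y| = v(G) + |S|` and
`e(G) - 1 = ρ₂(G) (v(G) - 2)` leaves `e(P) - e(G[X]) + e(G[S]) - 1 < ρ₂(G) (|S| - 2)`. This is
absurd for `S = ∅` because `ρ₂(G) ≥ 1/2` (there are no isolated vertices), for `|S| = 1` because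
`ρ₂(G) ≥ 1` (`G` is connected), and for `S = {x, y}` because either `xy` is an edge, or
contracting a component of `G - S` onto `y` gives a minor `P` on `X` with the extra edge `xy`.
-/

namespace SimpleGraph

open Set

variable {V W : Type*} {G : SimpleGraph V}

lemma Iso.rho2_eq {H : SimpleGraph W} (φ : G ≃g H) : G.rho2 = H.rho2 := by
  simp only [rho2, Nat.card_congr φ.mapEdgeSet, Nat.card_congr φ.toEquiv]

lemma rho2_mul_card_sub_two (he : 2 ≤ Nat.card G.edgeSet) (hV : Nat.card V ≠ 2) :
    G.rho2 * (Nat.card V - 2) = Nat.card G.edgeSet - 1 := by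
  rw [rho2, if_pos he, div_mul_cancel₀]
  exact sub_ne_zero.mpr (by exact_mod_cast hV)

lemma card_edgeSet_le_choose_two [Finite V] (G : SimpleGraph V) :
    Nat.card G.edgeSet ≤ (Nat.card V).choose 2 := by
  classical
  have := Fintype.ofFinite V
  rw [Nat.card_eq_fintype_card, Nat.card_eq_fintype_card, ← edgeFinset_card]
  exact G.card_edgeFinset_le_card_choose_two

lemma card_edgeSet_sup_edge [Finite V] {x y : V} (hxy : x ≠ y) (hadj : ¬ G.Adj x y) :
    Nat.card (G ⊔ edge x y).edgeSet = Nat.card G.edgeSet + 1 := by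
  classical
  have := Fintype.ofFinite V
  rw [Nat.card_eq_fintype_card, Nat.card_eq_fintype_card, ← edgeFinset_card, ← edgeFinset_card]
  exact G.card_edgeFinset_sup_edge hadj hxy

lemma card_le_two_mul_card_edgeSet [Finite V] (h : ∀ u, ∃ v, G.Adj u v) :
    Nat.card V ≤ 2 * Nat.card G.edgeSet := by
  classical
  have := Fintype.ofFinite V
  rw [Nat.card_eq_fintype_card, Nat.card_eq_fintype_card, ← edgeFinset_card,
    ← sum_degrees_eq_twice_card_edges, ← Finset.card_univ, Finset.card_eq_sum_ones]
  exact Finset.sum_le_sum fun u _ => (G.degree_pos_iff_exists_adj u).mpr (h u)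

lemma card_edgeSet_induce (s : Set V) :
    Nat.card (G.induce s).edgeSet = (G.edgeSet ∩ s.sym2).ncard := by
  rw [Nat.card_coe_set_eq,
    ← ncard_image_of_injective _ (Sym2.map.injective Subtype.val_injective)]
  congr 1
  ext e
  induction e using Sym2.ind with
  | _ u v => simp only [mem_image, Sym2.exists, Subtype.exists]; aesop (add simp adj_comm)

lemma compl_nonempty_of_ncard_lt {s : Set V} (h : s.ncard < Nat.card V) : sᶜ.Nonempty :=
  nonempty_compl.mpr fun hs => by simp [hs] at h

lemma IsMinor.of_iso {U : Type*} {H : SimpleGraph W} {H' : SimpleGraph U} (hH : H.IsMinor G)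
    (φ : H' ≃g H) : H'.IsMinor G := by
  obtain ⟨f, hconn, hdisj, hadj⟩ := hH
  exact ⟨f ∘ φ, fun w => hconn _, fun a b hab => hdisj (φ.injective.ne hab),
    fun a b hab => hadj (φ.map_adj_iff.mpr hab)⟩

lemma isMinor_induce (s : Set V) : (G.induce s).IsMinor G :=
  ⟨fun w => {(w : V)}, fun _ => .of_subsingleton,
    fun _ _ hab => disjoint_singleton.mpr (Subtype.coe_injective.ne hab),
    fun a b hab => ⟨a, rfl, b, rfl, hab⟩⟩

lemma isMinor_induce_sup_edge {X B : Set V} (hXB : Disjoint X B) {x y : V} (hx : x ∈ X)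
    (hy : y ∈ X) (hB : (G.induce B).Connected) (hxB : ∃ b ∈ B, G.Adj x b)
    (hyB : ∃ b ∈ B, G.Adj y b) :
    (G.induce X ⊔ edge ⟨x, hx⟩ ⟨y, hy⟩).IsMinor G := by
  classical
  obtain ⟨b, hb, hxb⟩ := hxB
  obtain ⟨b', hb', hyb'⟩ := hyB
  have hyB : (G.induce (insert y B)).Connected := by
    simpa [singleton_union] using connected_induce_union
      (Connected.of_subsingleton (G := G.induce {y})).preconnected hB.preconnected rfl hb' hyb'
  let f : X → Set V := fun w => if (w : V) = y then insert y B else {(w : V)}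
  have mem_f (w : X) : (w : V) ∈ f w := by
    by_cases h : (w : V) = y <;> simp [f, h]
  have f_subset (w : X) : f w ⊆ insert (w : V) B := by
    by_cases h : (w : V) = y <;> simp [f, h]
  have disjoint_f {w₁ w₂ : X} (hne : w₁ ≠ w₂) (h₁ : (w₁ : V) ≠ y) :
      Disjoint (f w₁) (f w₂) := by
    simp only [f, if_neg h₁, disjoint_singleton_left]
    intro hw₁
    rcases f_subset w₂ hw₁ with h | h
    · exact hne (Subtype.ext h)
    · exact hXB.notMem_of_mem_left w₁.2 h
  refine ⟨f, fun w => ?_, fun w₁ w₂ hne => ?_, fun w₁ w₂ hadj => ?_⟩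
  · by_cases h : (w : V) = y
    · rwa [show f w = insert y B from if_pos h]
    · rw [show f w = {(w : V)} from if_neg h]
      exact .of_subsingleton
  · by_cases h₁ : (w₁ : V) = y
    · exact (disjoint_f hne.symm fun h₂ => hne (Subtype.ext (h₁.trans h₂.symm))).symm
    · exact disjoint_f hne h₁
  · rw [sup_adj, edge_adj] at hadj
    obtain hadj | ⟨h, hne⟩ := hadj
    · exact ⟨w₁, mem_f w₁, w₂, mem_f w₂, hadj⟩
    · have hxy : x ≠ y := by
        rintro rfl
        exact hne (h.elim (fun h => h.1.trans h.2.symm) fun h => h.1.trans h.2.symm)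
      obtain ⟨rfl, rfl⟩ | ⟨rfl, rfl⟩ := h
      · exact ⟨x, by simp [f, hxy], b, by simp [f, hb], hxb⟩
      · exact ⟨b, by simp [f, hb], x, by simp [f, hxy], hxb.symm⟩

structure IsSeparation (G : SimpleGraph V) (X Y : Set V) : Prop where
  union_eq_univ : X ∪ Y = univ
  sdiff_nonempty_left : (X \ Y).Nonempty
  sdiff_nonempty_right : (Y \ X).Nonempty
  not_adj : ∀ u ∈ X \ Y, ∀ v ∈ Y \ X, ¬ G.Adj u v

lemma exists_isSeparation_of_not_connected_induce_compl {s : Set V} (hs : sᶜ.Nonempty)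
    (h : ¬ (G.induce sᶜ).Connected) :
    ∃ X Y, G.IsSeparation X Y ∧ X ∩ Y = s ∧ (G.induce (Y \ X)).Connected := by
  have := hs.to_subtype
  obtain ⟨u, v, huv⟩ : ∃ u v : (sᶜ : Set V), ¬ (G.induce sᶜ).Reachable u v := by
    by_contra! hpre
    exact h ⟨hpre⟩
  let C := (G.induce sᶜ).connectedComponentMk u
  let B : Set V := Subtype.val '' C.supp
  have hB : ∀ w (hw : w ∉ s), w ∈ B ↔ (G.induce sᶜ).Reachable u ⟨w, hw⟩ := by
    intro w hw
    simp only [B, C, mem_image, ConnectedComponent.mem_supp_iff, ConnectedComponent.eq,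
      reachable_comm, Subtype.exists, exists_and_right, exists_eq_right]
    exact ⟨fun ⟨_, h⟩ => h, fun h => ⟨hw, h⟩⟩
  have hBs : Disjoint B s := by
    rintro t htB hts w hw
    obtain ⟨w', -, rfl⟩ := htB hw
    exact w'.2 (hts hw)
  have hconn : (G.induce B).Connected := by
    refine C.connected_toSimpleGraph.map
      ⟨fun w => ⟨w.1.1, mem_image_of_mem _ w.2⟩, fun h => h⟩ ?_
    rintro ⟨_, w, hw, rfl⟩
    exact ⟨⟨w, hw⟩, rfl⟩
  refine ⟨Bᶜ, s ∪ B, ⟨?_, ⟨v, ?_⟩, ⟨u, ?_⟩, ?_⟩, ?_, ?_⟩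
  · simp [union_comm s, ← union_assoc]
  · have hvB : (v : V) ∉ B := fun hvB => huv ((hB v v.2).mp hvB)
    exact ⟨hvB, fun hv => hv.elim v.2 hvB⟩
  · have huB : (u : V) ∈ B := (hB u u.2).mpr (Reachable.refl _)
    exact ⟨Or.inr huB, not_not.mpr huB⟩
  · rintro a ⟨-, ha⟩ b ⟨-, hb⟩ hab
    simp only [mem_union, not_or, mem_compl_iff, not_not] at ha hb
    have hbs := hBs.notMem_of_mem_left hb
    have hba : (G.induce sᶜ).Adj ⟨b, hbs⟩ ⟨a, ha.1⟩ := hab.symm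
    exact ha.2 ((hB a ha.1).mpr (((hB b hbs).mp hb).trans hba.reachable))
  · rw [inter_union_distrib_left, compl_inter_self, union_empty, inter_eq_right]
    exact hBs.symm.subset_compl_right
  · rwa [Set.sdiff_compl, union_inter_cancel_right]

namespace IsSeparation

variable {X Y : Set V}

lemma symm (h : G.IsSeparation X Y) : G.IsSeparation Y X :=
  ⟨by rw [union_comm, h.union_eq_univ], h.sdiff_nonempty_right, h.sdiff_nonempty_left,
    fun u hu v hv huv => h.not_adj v hv u hu huv.symm⟩

lemma ncard_add_ncard [Finite V] (h : G.IsSeparation X Y) :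
    X.ncard + Y.ncard = Nat.card V + (X ∩ Y).ncard := by
  rw [← ncard_union_add_ncard_inter, h.union_eq_univ, ncard_univ]

lemma ncard_left_lt [Finite V] (h : G.IsSeparation X Y) : X.ncard < Nat.card V :=
  ncard_lt_card fun hX => by simpa [hX] using h.sdiff_nonempty_right

lemma two_le_ncard_left [Finite V] (h : G.IsSeparation X Y) (hG : ∀ u, ∃ v, G.Adj u v) :
    2 ≤ X.ncard := by
  obtain ⟨u, hu⟩ := h.sdiff_nonempty_left
  obtain ⟨v, huv⟩ := hG u
  have hv : v ∈ X := by
    by_contra hv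
    have hvY : v ∈ Y := (h.union_eq_univ ▸ mem_univ v).resolve_left hv
    exact h.not_adj u hu v ⟨hvY, hv⟩ huv
  calc 2 = ({u, v} : Set V).ncard := (ncard_pair huv.ne).symm
    _ ≤ X.ncard := ncard_le_ncard (pair_subset hu.1 hv)

lemma card_edgeSet_induce_add [Finite V] (h : G.IsSeparation X Y) :
    Nat.card (G.induce X).edgeSet + Nat.card (G.induce Y).edgeSet =
      Nat.card G.edgeSet + Nat.card (G.induce (X ∩ Y)).edgeSet := by
  have hcover : G.edgeSet ⊆ X.sym2 ∪ Y.sym2 := by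
    rintro ⟨u, v⟩ huv
    have hu := h.union_eq_univ ▸ mem_univ u
    have hv := h.union_eq_univ ▸ mem_univ v
    have huv' := h.not_adj u
    have hvu := h.not_adj v
    simp only [mem_union, mem_sdiff, mk_mem_sym2_iff] at hu hv huv' hvu ⊢
    have := G.adj_symm huv
    tauto
  rw [card_edgeSet_induce, card_edgeSet_induce, card_edgeSet_induce, sym2_inter,
    Nat.card_coe_set_eq G.edgeSet, inter_inter_distrib_left, ← ncard_union_add_ncard_inter,
    ← inter_union_distrib_left, inter_eq_left.mpr hcover]

lemma exists_adj_of_inter_eq_pair (h : G.IsSeparation X Y) {x y : V} (hXY : X ∩ Y = {x, y})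
    (hx : (G.induce {x}ᶜ).Connected) : ∃ b ∈ Y \ X, G.Adj y b := by
  have hxX : x ∈ X ∩ Y := hXY ▸ mem_insert x {y}
  obtain ⟨b, hb⟩ := h.sdiff_nonempty_right
  obtain ⟨a, ha⟩ := h.sdiff_nonempty_left
  obtain ⟨p⟩ := hx.preconnected ⟨b, fun hbx => hb.2 (hbx ▸ hxX.1)⟩
    ⟨a, fun hax => ha.2 (hax ▸ hxX.2)⟩
  obtain ⟨d, -, hd₁, hd₂⟩ :=
    p.exists_boundary_dart {w | (w : V) ∈ Y \ X} hb fun h' => ha.2 h'.1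
  have hd : (d.snd : V) ∈ X ∩ Y := by
    have hmem := h.union_eq_univ ▸ mem_univ (d.snd : V)
    simp only [mem_ofPred_eq, mem_sdiff, not_and, not_not] at hd₁ hd₂
    refine ⟨hmem.elim id fun hY => hd₂ hY, by_contra fun hY => ?_⟩
    exact h.not_adj _ ⟨hmem.resolve_right hY, hY⟩ _ hd₁ d.adj.symm
  rw [hXY] at hd
  obtain hdx | hdy := hd
  · exact absurd hdx d.snd.2
  · exact ⟨d.fst, hd₁, hdy ▸ d.adj.symm⟩

end IsSeparation

def IsStrictlyTwoMinorBalanced (G : SimpleGraph V) : Prop :=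
  0 < G.rho2 ∧ ∀ (j : ℕ) (H : SimpleGraph (Fin j)), H.IsProperMinor G → H.rho2 < G.rho2

namespace IsStrictlyTwoMinorBalanced

lemma rho2_lt (hG : G.IsStrictlyTwoMinorBalanced) [Finite W] {H : SimpleGraph W}
    (hH : H.IsProperMinor G) : H.rho2 < G.rho2 := by
  obtain ⟨hminor, hproper⟩ := hH
  let φ := Iso.comap (Finite.equivFin W).symm H
  rw [← φ.rho2_eq]
  exact hG.2 _ _ ⟨hminor.of_iso φ, ⟨fun ψ => hproper.false (φ.symm.trans ψ)⟩⟩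

lemma two_le_card_edgeSet (hG : G.IsStrictlyTwoMinorBalanced) : 2 ≤ Nat.card G.edgeSet := by
  by_contra h
  exact hG.1.ne' (if_neg h)

lemma card_edgeSet_sub_one_lt (hG : G.IsStrictlyTwoMinorBalanced) [Finite W]
    {H : SimpleGraph W} (hH : H.IsMinor G) (hW : 3 ≤ Nat.card W) (hWV : Nat.card W < Nat.card V) :
    (Nat.card H.edgeSet : ℝ) - 1 < G.rho2 * (Nat.card W - 2) := by
  have hW' : (0 : ℝ) < Nat.card W - 2 := by
    have : (3 : ℝ) ≤ Nat.card W := by exact_mod_cast hW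
    linarith
  by_cases he : 2 ≤ Nat.card H.edgeSet
  · have hlt := hG.rho2_lt ⟨hH, ⟨fun φ => hWV.ne (Nat.card_congr φ.toEquiv)⟩⟩
    rw [← rho2_mul_card_sub_two he (by omega)]
    exact mul_lt_mul_of_pos_right hlt hW'
  · have : Nat.card H.edgeSet ≤ 1 := by omega
    have : (Nat.card H.edgeSet : ℝ) ≤ 1 := by exact_mod_cast this
    linarith [mul_pos hG.1 hW']

lemma card_edgeSet_sub_one_le (hG : G.IsStrictlyTwoMinorBalanced) [Finite W]
    {H : SimpleGraph W} (hH : H.IsMinor G) (hW : 2 ≤ Nat.card W) (hWV : Nat.card W < Nat.card V) :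
    (Nat.card H.edgeSet : ℝ) - 1 ≤ G.rho2 * (Nat.card W - 2) := by
  obtain hW | hW := hW.eq_or_lt
  · have : Nat.card H.edgeSet ≤ 1 := by simpa [← hW] using H.card_edgeSet_le_choose_two
    have : (Nat.card H.edgeSet : ℝ) ≤ 1 := by exact_mod_cast this
    simp only [← hW, Nat.cast_ofNat, sub_self, mul_zero]
    linarith
  · exact (hG.card_edgeSet_sub_one_lt hH hW hWV).le

lemma exists_adj [Finite V] (hG : G.IsStrictlyTwoMinorBalanced) (hV : 4 ≤ Nat.card V) (u : V) :
    ∃ v, G.Adj u v := by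
  by_contra! hu
  have hcard : Nat.card ({u}ᶜ : Set V) = Nat.card V - 1 := by
    rw [Nat.card_coe_set_eq, ncard_compl, ncard_singleton]
  have hedges : Nat.card (G.induce {u}ᶜ).edgeSet = Nat.card G.edgeSet := by
    have hsupp : G.support ⊆ {u}ᶜ := fun v ⟨w, hvw⟩ (hvu : v = u) => hu w (hvu ▸ hvw)
    rw [card_edgeSet_induce, inter_eq_left.mpr (edgeSet_subset_sym2_iff.mpr hsupp),
      Nat.card_coe_set_eq]
  have hlt := hG.card_edgeSet_sub_one_lt (isMinor_induce {u}ᶜ) (by omega) (by omega)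
  rw [hedges, hcard, Nat.cast_sub (by omega)] at hlt
  have hρ := rho2_mul_card_sub_two hG.two_le_card_edgeSet (by omega)
  push_cast at hlt
  linarith [hG.1]

lemma card_edgeSet_induce_inter_add_sub_one_lt [Finite V] (hG : G.IsStrictlyTwoMinorBalanced)
    (hV : 5 ≤ Nat.card V) {X Y : Set V} (hXY : G.IsSeparation X Y) {P : SimpleGraph X}
    (hP : P.IsMinor G) {k : ℕ} (hk : Nat.card (G.induce X).edgeSet + k ≤ Nat.card P.edgeSet) :
    ((Nat.card (G.induce (X ∩ Y)).edgeSet + k : ℕ) : ℝ) - 1 <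
      G.rho2 * ((X ∩ Y).ncard - 2) := by
  have hadj := hG.exists_adj (by omega)
  have hX2 : 2 ≤ Nat.card X := by
    simpa only [Nat.card_coe_set_eq] using hXY.two_le_ncard_left hadj
  have hY2 : 2 ≤ Nat.card Y := by
    simpa only [Nat.card_coe_set_eq] using hXY.symm.two_le_ncard_left hadj
  have hXV : Nat.card X < Nat.card V := by
    simpa only [Nat.card_coe_set_eq] using hXY.ncard_left_lt
  have hYV : Nat.card Y < Nat.card V := by
    simpa only [Nat.card_coe_set_eq] using hXY.symm.ncard_left_lt
  have hcard : Nat.card X + Nat.card Y = Nat.card V + (X ∩ Y).ncard := by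
    simpa only [Nat.card_coe_set_eq] using hXY.ncard_add_ncard
  have hsum : ((Nat.card P.edgeSet : ℝ) - 1) + ((Nat.card (G.induce Y).edgeSet : ℝ) - 1) <
      G.rho2 * (Nat.card X - 2) + G.rho2 * (Nat.card Y - 2) := by
    obtain h3 | h3 : 3 ≤ Nat.card X ∨ 3 ≤ Nat.card Y := by omega
    · exact add_lt_add_of_lt_of_le (hG.card_edgeSet_sub_one_lt hP h3 hXV)
        (hG.card_edgeSet_sub_one_le (isMinor_induce Y) hY2 hYV)
    · exact add_lt_add_of_le_of_lt (hG.card_edgeSet_sub_one_le hP hX2 hXV)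
        (hG.card_edgeSet_sub_one_lt (isMinor_induce Y) h3 hYV)
  have hk' : (Nat.card (G.induce X).edgeSet : ℝ) + k ≤ Nat.card P.edgeSet := by
    exact_mod_cast hk
  have hedges : (Nat.card (G.induce X).edgeSet : ℝ) + Nat.card (G.induce Y).edgeSet =
      Nat.card G.edgeSet + Nat.card (G.induce (X ∩ Y)).edgeSet := by
    exact_mod_cast hXY.card_edgeSet_induce_add
  have hρ : G.rho2 * (Nat.card X - 2) + G.rho2 * (Nat.card Y - 2) =
      G.rho2 * (Nat.card V - 2) + G.rho2 * ((X ∩ Y).ncard - 2) := by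
    have hcard' : (Nat.card X : ℝ) + Nat.card Y = Nat.card V + (X ∩ Y).ncard := by
      exact_mod_cast hcard
    linear_combination G.rho2 * hcard'
  have hG' := rho2_mul_card_sub_two hG.two_le_card_edgeSet (by omega)
  push_cast
  linarith

lemma one_le_two_mul_rho2 [Finite V] (hG : G.IsStrictlyTwoMinorBalanced) (hV : 5 ≤ Nat.card V) :
    1 ≤ 2 * G.rho2 := by
  have hρ := rho2_mul_card_sub_two hG.two_le_card_edgeSet (by omega)
  have he : (Nat.card V : ℝ) ≤ 2 * Nat.card G.edgeSet := by
    exact_mod_cast card_le_two_mul_card_edgeSet (hG.exists_adj (by omega))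
  have hV' : (5 : ℝ) ≤ Nat.card V := by exact_mod_cast hV
  nlinarith

lemma connected [Finite V] (hG : G.IsStrictlyTwoMinorBalanced) (hV : 5 ≤ Nat.card V) :
    G.Connected := by
  by_contra h
  rw [← G.induceUnivIso.connected_iff, ← compl_empty] at h
  obtain ⟨X, Y, hXY, hinter, -⟩ := exists_isSeparation_of_not_connected_induce_compl
    (compl_nonempty_of_ncard_lt (by rw [ncard_empty]; omega)) h
  have hlt := hG.card_edgeSet_induce_inter_add_sub_one_lt hV hXY (isMinor_induce X) (k := 0)
    le_rfl
  rw [hinter, ncard_empty] at hlt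
  push_cast at hlt
  linarith [hG.one_le_two_mul_rho2 hV, (Nat.card (G.induce ∅).edgeSet).cast_nonneg (α := ℝ)]

lemma one_le_rho2 [Finite V] (hG : G.IsStrictlyTwoMinorBalanced) (hV : 5 ≤ Nat.card V) :
    1 ≤ G.rho2 := by
  have hρ := rho2_mul_card_sub_two hG.two_le_card_edgeSet (by omega)
  have he : (Nat.card V : ℝ) ≤ Nat.card G.edgeSet + 1 := by
    exact_mod_cast (hG.connected hV).card_vert_le_card_edgeSet_add_one
  have hV' : (5 : ℝ) ≤ Nat.card V := by exact_mod_cast hV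
  nlinarith

lemma connected_induce_compl_singleton [Finite V] (hG : G.IsStrictlyTwoMinorBalanced)
    (hV : 5 ≤ Nat.card V) (x : V) : (G.induce {x}ᶜ).Connected := by
  by_contra h
  obtain ⟨X, Y, hXY, hinter, -⟩ := exists_isSeparation_of_not_connected_induce_compl
    (compl_nonempty_of_ncard_lt (by rw [ncard_singleton]; omega)) h
  have hlt := hG.card_edgeSet_induce_inter_add_sub_one_lt hV hXY (isMinor_induce X) (k := 0)
    le_rfl
  rw [hinter, ncard_singleton] at hlt
  push_cast at hlt
  linarith [hG.one_le_rho2 hV, (Nat.card (G.induce {x}).edgeSet).cast_nonneg (α := ℝ)]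

lemma connected_induce_compl_pair [Finite V] (hG : G.IsStrictlyTwoMinorBalanced)
    (hV : 5 ≤ Nat.card V) {x y : V} (hxy : x ≠ y) : (G.induce {x, y}ᶜ).Connected := by
  by_contra h
  obtain ⟨X, Y, hXY, hinter, hconn⟩ := exists_isSeparation_of_not_connected_induce_compl
    (compl_nonempty_of_ncard_lt (by rw [ncard_pair hxy]; omega)) h
  have hx : x ∈ X := (hinter ▸ mem_insert x {y} : x ∈ X ∩ Y).1
  have hy : y ∈ X := (hinter ▸ mem_insert_of_mem x rfl : y ∈ X ∩ Y).1
  by_cases hadj : G.Adj x y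
  · have hlt := hG.card_edgeSet_induce_inter_add_sub_one_lt hV hXY (isMinor_induce X) (k := 0)
      le_rfl
    rw [hinter, ncard_pair hxy] at hlt
    have hedge : 0 < Nat.card (G.induce {x, y}).edgeSet := Nat.card_pos_iff.mpr
      ⟨⟨⟨s(⟨x, by simp⟩, ⟨y, by simp⟩), hadj⟩⟩, inferInstance⟩
    have : (1 : ℝ) ≤ Nat.card (G.induce {x, y}).edgeSet := by exact_mod_cast hedge
    push_cast at hlt
    linarith
  · have hxB := hXY.exists_adj_of_inter_eq_pair (pair_comm x y ▸ hinter)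
      (hG.connected_induce_compl_singleton hV y)
    have hyB := hXY.exists_adj_of_inter_eq_pair hinter (hG.connected_induce_compl_singleton hV x)
    have hP := isMinor_induce_sup_edge disjoint_sdiff_right hx hy hconn hxB hyB
    have hlt := hG.card_edgeSet_induce_inter_add_sub_one_lt hV hXY hP
      (card_edgeSet_sup_edge (fun h => hxy (congrArg Subtype.val h)) hadj).ge
    rw [hinter, ncard_pair hxy] at hlt
    push_cast at hlt
    linarith [(Nat.card (G.induce {x, y}).edgeSet).cast_nonneg (α := ℝ)]

end IsStrictlyTwoMinorBalanced

end SimpleGraph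

/-- a strictly 2-minor-balanced graph on `v ≥ 5` vertices is 3-connected:
it has at least 4 vertices and deleting any at most 2 vertices leaves it connected. -/
theorem stmt15 {n : ℕ} (hn : 5 ≤ n) (G : SimpleGraph (Fin n))
    (hpos : 0 < G.rho2)
    (hbal : ∀ (j : ℕ) (H : SimpleGraph (Fin j)), H.IsProperMinor G → H.rho2 < G.rho2) :
    4 ≤ n ∧ ∀ s : Set (Fin n), s.ncard ≤ 2 → (G.induce sᶜ).Connected := by
  have hG : G.IsStrictlyTwoMinorBalanced := ⟨hpos, hbal⟩
  have hV : 5 ≤ Nat.card (Fin n) := by simpa using hn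
  refine ⟨by omega, fun s hs => ?_⟩
  obtain hs | hs | hs : s.ncard = 0 ∨ s.ncard = 1 ∨ s.ncard = 2 := by omega
  · rw [(Set.ncard_eq_zero (Set.toFinite s)).mp hs, Set.compl_empty, G.induceUnivIso.connected_iff]
    exact hG.connected hV
  · obtain ⟨x, rfl⟩ := Set.ncard_eq_one.mp hs
    exact hG.connected_induce_compl_singleton hV x
  · obtain ⟨x, y, hxy, rfl⟩ := Set.ncard_eq_two.mp hs
    exact hG.connected_induce_compl_pair hV hxy
end

section
/- Suppose positive integers m_1, t_1, k satisfy k ≥ 2 and 0 ≤ t_1 ≤ k - 2. Then there exist an integer ℓ ≥ 2 and integers m_2 = ℓ(m_1 + 1) - 2 ≥ 1 and t_2 = 2k - 1 - ℓ(k - 1 - t_1) with 0 ≤ t_2 ≤ k - 1 such that, setting n_1 = m_1 k + 1 + t_1 and n_2 = m_2 k + 1 + t_2, one has (t_1 + 1 - k)/(k · n_1) = (t_2 + 1 - 2k)/(k · n_2). -/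
/-! Put `d = k - 1 - t₁ ∈ [1, k - 1]` and let `ℓ = ⌊(2k - 1)/d⌋ ≥ 2`, so that `t₂ = (2k - 1) mod d`.
Then `t₂ + 1 - 2k = ℓ (t₁ + 1 - k)` and `m₂ k + 1 + t₂ = ℓ (m₁ k + 1 + t₁)`: both numerator and
denominator are multiplied by `ℓ`. -/

lemma exists_two_le_and_sub_mul_mem_Icc {k d : ℤ} (hd : 1 ≤ d) (hdk : d ≤ k - 1) :
    ∃ ℓ : ℤ, 2 ≤ ℓ ∧ 0 ≤ 2 * k - 1 - ℓ * d ∧ 2 * k - 1 - ℓ * d ≤ k - 1 := by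
  refine ⟨(2 * k - 1) / d, (Int.le_ediv_iff_mul_le (by omega)).2 (by omega), ?_⟩
  have hd₀ : 0 < d := by omega
  have hrem : 2 * k - 1 - (2 * k - 1) / d * d = (2 * k - 1) % d := by
    rw [Int.emod_def]; ring
  rw [hrem]
  exact ⟨Int.emod_nonneg _ hd₀.ne', by have := Int.emod_lt_of_pos (2 * k - 1) hd₀; omega⟩

theorem stmt19_general (m₁ t₁ k : ℤ) (hm₁ : 1 ≤ m₁)
    (ht₁ : 0 ≤ t₁) (ht₁' : t₁ ≤ k - 2) :
    ∃ ℓ m₂ t₂ : ℤ, 2 ≤ ℓ ∧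
      m₂ = ℓ * (m₁ + 1) - 2 ∧ 1 ≤ m₂ ∧
      t₂ = 2 * k - 1 - ℓ * (k - 1 - t₁) ∧ 0 ≤ t₂ ∧ t₂ ≤ k - 1 ∧
      ((t₁ : ℝ) + 1 - k) / ((k : ℝ) * ((m₁ : ℝ) * k + 1 + t₁))
        = ((t₂ : ℝ) + 1 - 2 * k) / ((k : ℝ) * ((m₂ : ℝ) * k + 1 + t₂)) := by
  obtain ⟨ℓ, hℓ, ht₂, ht₂'⟩ :=
    exists_two_le_and_sub_mul_mem_Icc (k := k) (d := k - 1 - t₁) (by omega) (by omega)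
  refine ⟨ℓ, _, _, hℓ, rfl, by nlinarith, rfl, ht₂, ht₂', ?_⟩
  have hℓ₀ : (ℓ : ℝ) ≠ 0 := by exact_mod_cast (by omega : ℓ ≠ 0)
  push_cast
  calc ((t₁ : ℝ) + 1 - k) / (k * (m₁ * k + 1 + t₁))
      = ℓ * ((t₁ : ℝ) + 1 - k) / (ℓ * (k * (m₁ * k + 1 + t₁))) :=
        (mul_div_mul_left _ _ hℓ₀).symm
    _ = _ := by congr 1 <;> ring

/-- given integers `m₁ ≥ 1`, `k ≥ 2`, `0 ≤ t₁ ≤ k-2`, there exist `ℓ ≥ 2`,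
`m₂ = ℓ(m₁+1) - 2 ≥ 1` and `t₂ = 2k - 1 - ℓ(k-1-t₁)` with `0 ≤ t₂ ≤ k-1` such that,
with `n₁ = m₁k + 1 + t₁` and `n₂ = m₂k + 1 + t₂`,
`(t₁ + 1 - k)/(k·n₁) = (t₂ + 1 - 2k)/(k·n₂)`. -/
theorem stmt19 (m₁ t₁ k : ℤ) (hm₁ : 1 ≤ m₁) (hk : 2 ≤ k)
    (ht₁ : 0 ≤ t₁) (ht₁' : t₁ ≤ k - 2) :
    ∃ ℓ m₂ t₂ : ℤ, 2 ≤ ℓ ∧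
      m₂ = ℓ * (m₁ + 1) - 2 ∧ 1 ≤ m₂ ∧
      t₂ = 2 * k - 1 - ℓ * (k - 1 - t₁) ∧ 0 ≤ t₂ ∧ t₂ ≤ k - 1 ∧
      ((t₁ : ℝ) + 1 - k) / ((k : ℝ) * ((m₁ : ℝ) * k + 1 + t₁))
        = ((t₂ : ℝ) + 1 - 2 * k) / ((k : ℝ) * ((m₂ : ℝ) * k + 1 + t₂)) :=
  stmt19_general m₁ t₁ k hm₁ ht₁ ht₁'
end
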